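/- arXiv:2505.06667 — 8 statements merged into one kernel-verified Lean document; each statement's English description precedes it below -/
import Mathlib

section
/- Let D be a division ring in which every nonconstant polynomial in one central variable with coefficients in D has a root in D (i.e., D is algebraically closed as a division ring). Then every polynomial f ∈ D[x] that is injective as a function from D to D is surjective. -/
namespace Polynomial

theorem degree_pos_of_injective_eval {R : Type*} [Semiring R] [Nontrivial R] {p : R[X]}
    (hp : Function.Injective fun a : R => p.eval a) : 0 < p.degree := by
  by_contra! hle
  rw [eq_C_of_degree_le_zero hle] at hp
  exact zero_ne_one (hp (by simp only [eval_C]))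

theorem surjective_eval_of_degree_pos {R : Type*} [Ring R]
    (hroot : ∀ p : R[X], 0 < p.degree → ∃ a : R, p.eval a = 0) {p : R[X]}
    (hp : 0 < p.degree) : Function.Surjective fun a : R => p.eval a := by
  intro b
  obtain ⟨a, ha⟩ := hroot (p - C b) (by rwa [degree_sub_C hp])
  exact ⟨a, by rwa [eval_sub, eval_C, sub_eq_zero] at ha⟩

end Polynomial

/-- Over a division ring in which every nonconstant polynomial (in one central
variable) has a root, every injective polynomial map `D → D` is surjective. -/
theorem injective_polynomial_map_surjective (D : Type*) [DivisionRing D]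
    (hac : ∀ p : Polynomial D, 0 < p.degree → ∃ a : D, p.eval a = 0)
    (f : Polynomial D) (hf : Function.Injective fun a : D => f.eval a) :
    Function.Surjective fun a : D => f.eval a :=
  Polynomial.surjective_eval_of_degree_pos hac (Polynomial.degree_pos_of_injective_eval hf)
end

section
/- Let D be an infinite division ring with infinitely many conjugacy classes, and let p ∈ D[x] be a nonconstant polynomial. Then the image of p evaluated on D is infinite. -/
/-!
If the image of `p` were finite, every element `a` would be a root of one of the finitely many
polynomials `p - C v` with `v` in the image. By Gordon–Motzkin each of them has roots in at most
`deg p` conjugacy classes, so `D` would have only finitely many conjugacy classes.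

Gordon–Motzkin itself follows from the right factor theorem `p = q * (X - C a)` for a root `a`
and the product formula `(q * f)(b) = q(c b c⁻¹) c` where `c = f(b) ≠ 0`: a root `b ≠ a` of
`q * (X - C a)` is conjugate to a root of `q`.
-/

open Polynomial

namespace Polynomial

section Ring

variable {R : Type*} [Ring R]

theorem exists_eq_mul_X_sub_C_add_C_eval (p : R[X]) (a : R) :
    ∃ q : R[X], p = q * (X - C a) + C (p.eval a) := by
  induction p using Polynomial.induction_on' with
  | add p r hp hr =>
    obtain ⟨qp, hqp⟩ := hp
    obtain ⟨qr, hqr⟩ := hr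
    refine ⟨qp + qr, ?_⟩
    rw [eval_add, C_add, add_mul]
    conv_lhs => rw [hqp, hqr]
    abel
  | monomial n c =>
    refine ⟨C c * ∑ i ∈ Finset.range n, X ^ i * C a ^ (n - 1 - i), ?_⟩
    rw [mul_assoc, (commute_X (C a)).geom_sum₂_mul, eval_monomial, ← C_mul_X_pow_eq_monomial,
      C_mul, C_pow]
    noncomm_ring

theorem exists_eq_mul_X_sub_C_of_isRoot {p : R[X]} {a : R} (h : p.IsRoot a) :
    ∃ q : R[X], p = q * (X - C a) := by
  obtain ⟨q, hq⟩ := exists_eq_mul_X_sub_C_add_C_eval p a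
  exact ⟨q, by rwa [h.eq_zero, C_0, add_zero] at hq⟩

/-- Over a noncommutative ring `(q * f).eval b ≠ q.eval b * f.eval b` in general, but the right
factor may still be evaluated first. -/
theorem eval_mul_eq_eval_mul_C_eval (q f : R[X]) (b : R) :
    (q * f).eval b = (q * C (f.eval b)).eval b := by
  induction q using Polynomial.induction_on' with
  | add q r hq hr => rw [add_mul, add_mul, eval_add, eval_add, hq, hr]
  | monomial n c =>
    rw [monomial_mul_C, eval_monomial, ← C_mul_X_pow_eq_monomial, mul_assoc,
      (commute_X_pow f n).eq, ← mul_assoc, eval_mul_X_pow, eval_C_mul, mul_assoc]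

end Ring

section DivisionRing

variable {D : Type*} [DivisionRing D]

theorem eval_mul_C_of_ne_zero (q : D[X]) {g : D} (hg : g ≠ 0) (b : D) :
    (q * C g).eval b = q.eval (g * b * g⁻¹) * g := by
  induction q using Polynomial.induction_on' with
  | add q r hq hr => rw [add_mul, eval_add, eval_add, hq, hr, add_mul]
  | monomial n c =>
    have hconj : (g * b * g⁻¹) ^ n = g * b ^ n * g⁻¹ := by
      simpa only [inv_inv] using GroupWithZero.conj_pow₀ (d := b) (s := n) (inv_ne_zero hg)
    rw [monomial_mul_C, eval_monomial, eval_monomial, hconj, mul_assoc c, mul_assoc c,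
      inv_mul_cancel_right₀ hg]

theorem eval_mul_of_eval_ne_zero (q f : D[X]) {b : D} (hf : f.eval b ≠ 0) :
    (q * f).eval b = q.eval (f.eval b * b * (f.eval b)⁻¹) * f.eval b := by
  rw [eval_mul_eq_eval_mul_C_eval, eval_mul_C_of_ne_zero q hf]

theorem conjClasses_roots_mul_X_sub_C_subset (q : D[X]) (a : D) :
    ConjClasses.mk '' {b | (q * (X - C a)).IsRoot b} ⊆
      insert (ConjClasses.mk a) (ConjClasses.mk '' {c | q.IsRoot c}) := by
  rintro _ ⟨b, hb, rfl⟩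
  obtain rfl | hba := eq_or_ne b a
  · exact Set.mem_insert _ _
  have hg : (X - C a).eval b ≠ 0 := by simpa [sub_eq_zero] using hba
  set g := (X - C a).eval b
  have hroot : q.IsRoot (g * b * g⁻¹) := by
    have hb' := hb.eq_zero
    rwa [eval_mul_of_eval_ne_zero q _ hg, mul_eq_zero, or_iff_left hg] at hb'
  refine Or.inr ⟨_, hroot, ConjClasses.mk_eq_mk_iff_isConj.mpr ?_⟩
  exact (GroupWithZero.isConj_iff₀.mpr ⟨g, hg, rfl⟩).symm

/-- Gordon–Motzkin. -/
theorem encard_conjClasses_roots_le_natDegree {p : D[X]} (hp : p ≠ 0) :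
    (ConjClasses.mk '' {a | p.IsRoot a}).encard ≤ p.natDegree := by
  by_cases hroot : ∃ a, p.IsRoot a
  · obtain ⟨a, ha⟩ := hroot
    obtain ⟨q, rfl⟩ := exists_eq_mul_X_sub_C_of_isRoot ha
    have hq : q ≠ 0 := by rintro rfl; exact hp (zero_mul _)
    have hdeg : (q * (X - C a)).natDegree = q.natDegree + 1 := by
      rw [natDegree_mul hq (X_sub_C_ne_zero a), natDegree_X_sub_C]
    have := encard_conjClasses_roots_le_natDegree hq
    rw [hdeg, Nat.cast_succ]
    calc _ ≤ (insert (ConjClasses.mk a) (ConjClasses.mk '' {c | q.IsRoot c})).encard :=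
          Set.encard_le_encard (conjClasses_roots_mul_X_sub_C_subset q a)
      _ ≤ (ConjClasses.mk '' {c | q.IsRoot c}).encard + 1 := Set.encard_insert_le _ _
      _ ≤ q.natDegree + 1 := by gcongr
  · have hempty : {a | p.IsRoot a} = ∅ := Set.eq_empty_of_forall_notMem (not_exists.mp hroot)
    simp only [hempty, Set.image_empty, Set.encard_empty, zero_le]
termination_by p.natDegree
decreasing_by
  subst_vars
  omega

theorem finite_conjClasses_roots {p : D[X]} (hp : p ≠ 0) :
    (ConjClasses.mk '' {a | p.IsRoot a}).Finite :=
  Set.finite_of_encard_le_coe (encard_conjClasses_roots_le_natDegree hp)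

end DivisionRing

end Polynomial

theorem image_of_nonconstant_polynomial_infinite_general (D : Type*) [DivisionRing D]
    [Infinite (ConjClasses D)]
    (p : Polynomial D) (hp : 0 < p.degree) :
    (Set.range fun a : D => p.eval a).Infinite := by
  intro hfin
  have hroots (v : D) : (ConjClasses.mk '' {a | (p - C v).IsRoot a}).Finite :=
    finite_conjClasses_roots (ne_zero_of_degree_gt ((degree_sub_C hp).symm ▸ hp))
  refine Set.infinite_univ (Set.Finite.subset (hfin.biUnion fun v _ => hroots v) ?_)
  rintro x -
  obtain ⟨a, rfl⟩ := ConjClasses.mk_surjective x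
  exact Set.mem_biUnion ⟨a, rfl⟩ ⟨a, by simp, rfl⟩

/-- If an infinite division ring `D` has infinitely many conjugacy classes, then the
image of any nonconstant polynomial `p ∈ D[x]` evaluated on `D` is infinite. -/
theorem image_of_nonconstant_polynomial_infinite (D : Type*) [DivisionRing D]
    [Infinite D] [Infinite (ConjClasses D)]
    (p : Polynomial D) (hp : 0 < p.degree) :
    (Set.range fun a : D => p.eval a).Infinite :=
  image_of_nonconstant_polynomial_infinite_general D p hp
end

section
/- Let D be a division ring and let p ∈ D[x] be a nonzero polynomial of degree t. Then the roots of p in D lie in at most t conjugacy classes of D. -/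
/-!
Over a noncommutative ring, `p(a) = 0` still means `p = q * (X - a)`, but a root `b ≠ a` of `p`
is no longer a root of `q`: with `u = b - a`, evaluating at `b` gives `0 = q(u b u⁻¹) u`, so the
conjugate `u b u⁻¹` is a root of `q`. Hence each factor `X - a` accounts for at most one new
conjugacy class of roots, and induction on the degree gives the bound.
-/

open Polynomial

namespace Polynomial

section Ring

variable {R : Type*} [Ring R]

theorem exists_eq_mul_X_sub_C_of_eval_eq_zero {p : R[X]} {a : R} (h : p.eval a = 0) :
    ∃ q : R[X], p = q * (X - C a) := by
  obtain ⟨q, hq⟩ := exists_eq_mul_X_sub_C_add_C_eval p a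
  exact ⟨q, by rwa [h, C_0, add_zero] at hq⟩

theorem eval_mul_C_of_semiconjBy (q : R[X]) {u b c : R} (h : SemiconjBy u b c) :
    (q * C u).eval b = q.eval c * u := by
  induction q using Polynomial.induction_on' with
  | add f g hf hg => rw [add_mul, eval_add, eval_add, hf, hg, add_mul]
  | monomial n r =>
    rw [monomial_mul_C, eval_monomial, eval_monomial, mul_assoc, (h.pow_right n).eq, mul_assoc]

theorem eval_mul_X_sub_C_eq_eval_mul_C_sub (q : R[X]) (a b : R) :
    (q * (X - C a)).eval b = (q * C (b - a)).eval b := by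
  have : q * (X - C a) = q * (X - C b) + q * C (b - a) := by
    rw [C_sub, ← mul_add]
    congr 1
    abel
  rw [this, eval_add, eval_mul_X_sub_C, zero_add]

def rootConjClasses (p : R[X]) : Set (ConjClasses R) :=
  ConjClasses.mk '' {a | p.eval a = 0}

end Ring

section DivisionRing

variable {D : Type*} [DivisionRing D]

theorem rootConjClasses_mul_X_sub_C_subset (q : D[X]) (a : D) :
    rootConjClasses (q * (X - C a)) ⊆ insert (ConjClasses.mk a) (rootConjClasses q) := by
  rintro _ ⟨b, hb, rfl⟩
  rcases eq_or_ne b a with rfl | hba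
  · exact Set.mem_insert _ _
  have hu : b - a ≠ 0 := sub_ne_zero.mpr hba
  set c := (b - a) * b * (b - a)⁻¹
  have hconj : SemiconjBy (b - a) b c := by
    simp only [SemiconjBy, c, mul_assoc, inv_mul_cancel₀ hu, mul_one]
  have hc : q.eval c = 0 := by
    have hcu : q.eval c * (b - a) = 0 := by
      rwa [← eval_mul_C_of_semiconjBy q hconj, ← eval_mul_X_sub_C_eq_eval_mul_C_sub]
    exact (mul_eq_zero.mp hcu).resolve_right hu
  refine Set.mem_insert_of_mem _ ⟨c, hc, ?_⟩
  exact ConjClasses.mk_eq_mk_iff_isConj.mpr ⟨Units.mk0 _ hu, hconj⟩ |>.symm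

theorem encard_rootConjClasses_le (p : D[X]) (hp : p ≠ 0) :
    (rootConjClasses p).encard ≤ p.natDegree := by
  rcases (rootConjClasses p).eq_empty_or_nonempty with hempty | ⟨_, a, ha, -⟩
  · simp [hempty]
  obtain ⟨q, rfl⟩ := exists_eq_mul_X_sub_C_of_eval_eq_zero ha
  have hq : q ≠ 0 := by rintro rfl; simp at hp
  have hdeg : (q * (X - C a)).natDegree = q.natDegree + 1 := by
    rw [natDegree_mul hq (X_sub_C_ne_zero a), natDegree_X_sub_C]
  rw [hdeg, Nat.cast_succ]
  calc (rootConjClasses (q * (X - C a))).encard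
      ≤ (insert (ConjClasses.mk a) (rootConjClasses q)).encard :=
        Set.encard_le_encard (rootConjClasses_mul_X_sub_C_subset q a)
    _ ≤ (rootConjClasses q).encard + 1 := Set.encard_insert_le _ _
    _ ≤ q.natDegree + 1 := by gcongr; exact encard_rootConjClasses_le q hq
termination_by p.natDegree
decreasing_by all_goals subst_vars; omega

end DivisionRing

end Polynomial

/-- Gordon–Motzkin: the roots of a nonzero polynomial of degree `t` over a division
ring lie in at most `t` conjugacy classes. -/
theorem gordon_motzkin (D : Type*) [DivisionRing D]
    (p : Polynomial D) (hp : p ≠ 0) :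
    (ConjClasses.mk '' {a : D | p.eval a = 0}).Finite ∧
      (ConjClasses.mk '' {a : D | p.eval a = 0}).ncard ≤ p.natDegree :=
  Set.encard_le_coe_iff_finite_ncard_le.mp (encard_rootConjClasses_le p hp)
end

section
/- Let D be an algebraically closed division ring with center F, and let p ∈ F⟨X₁,…,Xₘ⟩ be a noncommutative polynomial with zero constant term such that p does not vanish identically on F. Then the evaluation map p : Dᵐ → D is surjective, i.e., p(D) = D. -/
/-- Let `D` be an algebraically closed division ring with center `F`, and let
`p ∈ F⟨X₁,…,Xₘ⟩` have zero constant term and not vanish identically on `F`.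
Then the evaluation map `p : Dᵐ → D` is surjective. -/
theorem freeAlgebra_eval_surjective (D : Type*) [DivisionRing D]
    (hac : ∀ q : Polynomial D, 0 < q.degree → ∃ a : D, q.eval a = 0)
    (m : ℕ) (p : FreeAlgebra (Subring.center D) (Fin m))
    (hconst : (FreeAlgebra.lift (Subring.center D)
        (fun _ : Fin m => (0 : Subring.center D))) p = 0)
    (hpF : ∃ a : Fin m → Subring.center D,
        (FreeAlgebra.lift (Subring.center D) a) p ≠ 0) :
    ∀ d : D, ∃ a : Fin m → D, (FreeAlgebra.lift (Subring.center D) a) p = d := by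
  intro d
  set F := Subring.center D with hF
  obtain ⟨a, ha⟩ := hpF
  -- substitute X i ↦ (a i) • X to get a univariate polynomial over F
  let φ : FreeAlgebra F (Fin m) →ₐ[F] Polynomial F :=
    FreeAlgebra.lift F (fun i => Polynomial.C (a i) * Polynomial.X)
  set f : Polynomial F := φ p with hfdef
  -- evaluation at 0 gives the constant-term hypothesis
  have h0 : Polynomial.aeval (0 : F) f = 0 := by
    have hcomp : (Polynomial.aeval (0 : F)).comp φ
        = FreeAlgebra.lift F (fun _ : Fin m => (0 : F)) := by
      apply FreeAlgebra.hom_ext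
      funext i
      simp [φ]
    have := congrArg (fun g : FreeAlgebra F (Fin m) →ₐ[F] F => g p) hcomp
    simpa [hfdef] using this.trans hconst
  -- evaluation at 1 gives the value p(a) ≠ 0
  have h1 : Polynomial.aeval (1 : F) f = (FreeAlgebra.lift F a) p := by
    have hcomp : (Polynomial.aeval (1 : F)).comp φ = FreeAlgebra.lift F a := by
      apply FreeAlgebra.hom_ext
      funext i
      simp [φ]
    exact congrArg (fun g : FreeAlgebra F (Fin m) →ₐ[F] F => g p) hcomp
  -- so f is nonconstant
  have hdeg : 0 < f.degree := by
    by_contra h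
    push_neg at h
    have hfc : f = Polynomial.C (f.coeff 0) := Polynomial.eq_C_of_degree_le_zero h
    have h0' : Polynomial.aeval (0 : F) f = f.coeff 0 := by
      rw [hfc]; simp
    have h1' : Polynomial.aeval (1 : F) f = f.coeff 0 := by
      rw [hfc]; simp
    rw [h1'] at h1
    rw [h0'] at h0
    exact ha (h1.symm.trans h0)
  -- map f to D[X]; its degree is unchanged
  set g : Polynomial D := f.map (algebraMap F D) with hgdef
  have hinj : Function.Injective (algebraMap F D) := (algebraMap F D).injective
  have hdegg : g.degree = f.degree := Polynomial.degree_map_eq_of_injective hinj f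
  -- solve g(t) = d
  have hdegq : 0 < (g - Polynomial.C d).degree := by
    have hlt : (Polynomial.C d).degree < g.degree := by
      calc (Polynomial.C d).degree ≤ 0 := Polynomial.degree_C_le
        _ < g.degree := by rw [hdegg]; exact hdeg
    rw [Polynomial.degree_sub_eq_left_of_degree_lt hlt, hdegg]
    exact hdeg
  obtain ⟨t, ht⟩ := hac (g - Polynomial.C d) hdegq
  have hgt : g.eval t = d := by
    have := ht
    rw [Polynomial.eval_sub, Polynomial.eval_C, sub_eq_zero] at this
    exact this
  -- g(t) = aeval t f
  have haeval : Polynomial.aeval t f = d := by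
    rw [Polynomial.aeval_def, ← Polynomial.eval_map, ← hgdef, hgt]
  refine ⟨fun i => (algebraMap F D (a i)) * t, ?_⟩
  have hcomp : (Polynomial.aeval t).comp φ
      = FreeAlgebra.lift F (fun i => (algebraMap F D (a i)) * t) := by
    apply FreeAlgebra.hom_ext
    funext i
    simp [φ]
  have := congrArg (fun g : FreeAlgebra F (Fin m) →ₐ[F] D => g p) hcomp
  rw [← this]
  simpa [hfdef] using haeval
end

section
/- Let p ∈ ℝ[x] be a polynomial with no real root, and let A be a 2×2 real matrix with det(p(A)) = 0. Then p(A) = 0. -/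
open Polynomial Matrix

private lemma aux_det_root (q : Polynomial ℂ) (hq : q ≠ 0) (B : Matrix (Fin 2) (Fin 2) ℂ)
    (h : (Polynomial.aeval B q).det = 0) :
    ∃ z ∈ q.roots, (B - Matrix.scalar (Fin 2) z).det = 0 := by
  have hsplit : Multiset.card q.roots = q.natDegree :=
    (Polynomial.splits_iff_card_roots).mp (IsAlgClosed.splits q)
  have hfac := Polynomial.C_leadingCoeff_mul_prod_multiset_X_sub_C hsplit
  set φ : Polynomial ℂ →* ℂ :=
    Matrix.detMonoidHom.comp
      (Polynomial.aeval B : Polynomial ℂ →ₐ[ℂ] Matrix (Fin 2) (Fin 2) ℂ).toRingHom.toMonoidHom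
    with hφ
  have hφ_apply : ∀ r : Polynomial ℂ, φ r = (Polynomial.aeval B r).det := fun r => rfl
  have h2 : φ q = 0 := by rw [hφ_apply]; exact h
  rw [← hfac, _root_.map_mul, map_multiset_prod, Multiset.map_map] at h2
  have hlcdet : φ (C q.leadingCoeff) ≠ 0 := by
    rw [hφ_apply, aeval_C, Algebra.algebraMap_eq_smul_one, det_smul, det_one]
    simp [Polynomial.leadingCoeff_ne_zero.mpr hq]
  have h3 : (Multiset.map (φ ∘ fun a => X - C a) q.roots).prod = 0 := by
    rcases mul_eq_zero.mp h2 with h' | h'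
    · exact absurd h' hlcdet
    · exact h'
  obtain ⟨y, hy, hy0⟩ := Multiset.mem_map.mp (Multiset.prod_eq_zero_iff.mp h3)
  refine ⟨y, hy, ?_⟩
  rw [← hy0]
  show _ = ((Polynomial.aeval B) (X - C y)).det
  congr 1
  rw [map_sub, aeval_X, aeval_C]
  rfl

/-- If `p ∈ ℝ[x]` has no real root and `A ∈ M₂(ℝ)` satisfies `det (p(A)) = 0`,
then `p(A) = 0`. -/
theorem det_eval_zero_imp_eval_zero (p : Polynomial ℝ)
    (hp : ∀ x : ℝ, p.eval x ≠ 0)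
    (A : Matrix (Fin 2) (Fin 2) ℝ)
    (h : (Polynomial.aeval A p).det = 0) :
    Polynomial.aeval A p = 0 := by
  classical
  have hp0 : p ≠ 0 := fun hh => hp 0 (by simp [hh])
  set B : Matrix (Fin 2) (Fin 2) ℂ := A.map (algebraMap ℝ ℂ) with hB
  set q : Polynomial ℂ := p.map (algebraMap ℝ ℂ) with hqdef
  have hq0 : q ≠ 0 := by
    simpa [hqdef, Polynomial.map_eq_zero_iff (algebraMap ℝ ℂ).injective] using hp0
  -- transfer the determinant hypothesis to ℂ
  have hdetC : (Polynomial.aeval B q).det = 0 := by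
    have e1 : Polynomial.aeval B q = Polynomial.aeval B p :=
      Polynomial.aeval_map_algebraMap ℂ B p
    have e2 : (AlgHom.mapMatrix (Algebra.ofId ℝ ℂ)) (Polynomial.aeval A p)
        = Polynomial.aeval B p := by
      rw [← Polynomial.aeval_algHom_apply]
      rfl
    have e3 : (Polynomial.aeval B p).det = (algebraMap ℝ ℂ) (Polynomial.aeval A p).det := by
      rw [← e2]
      exact (RingHom.map_det (algebraMap ℝ ℂ) (Polynomial.aeval A p)).symm
    rw [e1, e3, h, map_zero]
  obtain ⟨z, hzmem, hzdet⟩ := aux_det_root q hq0 B hdetC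
  -- z is a root of p over ℂ
  have hzp : Polynomial.aeval z p = 0 := by
    have := (Polynomial.mem_roots hq0).mp hzmem
    rwa [Polynomial.IsRoot, hqdef, Polynomial.eval_map, ← Polynomial.aeval_def] at this
  -- z is a root of charpoly A over ℂ
  have hzc : Polynomial.aeval z A.charpoly = 0 := by
    have hcB : B.charpoly = A.charpoly.map (algebraMap ℝ ℂ) :=
      (Matrix.charpoly_map A (algebraMap ℝ ℂ))
    have hzero : B.charpoly.eval z = 0 := by
      rw [Matrix.charpoly, _root_.eval_det, matPolyEquiv_charmatrix]
      simp only [Polynomial.eval_sub, Polynomial.eval_X, Polynomial.eval_C]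
      rw [← neg_sub, det_neg, hzdet, mul_zero]
    rw [hcB, Polynomial.eval_map, ← Polynomial.aeval_def] at hzero
    exact hzero
  -- z is not real
  have hznr : (starRingEnd ℂ) z ≠ z := by
    intro hcz
    have hzre : z = ((z.re : ℝ) : ℂ) := ((Complex.conj_eq_iff_re).mp hcz).symm
    have : Polynomial.aeval z p = ((p.eval z.re : ℝ) : ℂ) := by
      rw [hzre]
      rw [show ((z.re : ℝ) : ℂ) = algebraMap ℝ ℂ z.re from rfl,
        Polynomial.aeval_algebraMap_apply]
      simp
    rw [this] at hzp
    exact hp z.re (by exact_mod_cast hzp)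
  -- conjugate roots
  have hzp' : Polynomial.aeval ((starRingEnd ℂ) z) p = 0 := by
    rw [Polynomial.aeval_conj, hzp, map_zero]
  have hzc' : Polynomial.aeval ((starRingEnd ℂ) z) A.charpoly = 0 := by
    rw [Polynomial.aeval_conj, hzc, map_zero]
  -- the remainder r = p %ₘ charpoly A
  set c := A.charpoly with hc
  have hmonic : c.Monic := A.charpoly_monic
  have hcdeg : c.natDegree = 2 := by
    rw [hc, A.charpoly_natDegree_eq_dim, Fintype.card_fin]
  set r := p %ₘ c with hr
  have hid : r + c * (p /ₘ c) = p := Polynomial.modByMonic_add_div p c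
  have hzr : Polynomial.aeval z r = 0 := by
    have := congrArg (Polynomial.aeval z) hid
    rw [map_add, _root_.map_mul, hzc, zero_mul, add_zero, hzp] at this
    exact this
  have hzr' : Polynomial.aeval ((starRingEnd ℂ) z) r = 0 := by
    have := congrArg (Polynomial.aeval ((starRingEnd ℂ) z)) hid
    rw [map_add, _root_.map_mul, hzc', zero_mul, add_zero, hzp'] at this
    exact this
  -- r = 0
  have hrzero : r = 0 := by
    by_contra hrne
    have hdeg : r.natDegree < 2 := by
      have := Polynomial.degree_modByMonic_lt p hmonic
      have h2 := Polynomial.natDegree_lt_natDegree hrne this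
      rwa [hcdeg] at h2
    have hrC : r.map (algebraMap ℝ ℂ) = 0 := by
      apply Polynomial.eq_zero_of_natDegree_lt_card_of_eval_eq_zero' _ ({z, (starRingEnd ℂ) z} : Finset ℂ)
      · intro i hi
        rcases Finset.mem_insert.mp hi with rfl | hi
        · rw [Polynomial.eval_map, ← Polynomial.aeval_def]; exact hzr
        · rw [Finset.mem_singleton.mp hi, Polynomial.eval_map, ← Polynomial.aeval_def]
          exact hzr'
      · rw [Finset.card_insert_of_notMem (by simpa using hznr.symm), Finset.card_singleton]
        calc (r.map (algebraMap ℝ ℂ)).natDegree ≤ r.natDegree := Polynomial.natDegree_map_le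
          _ < 2 := hdeg
    exact hrne ((Polynomial.map_eq_zero_iff (algebraMap ℝ ℂ).injective).mp hrC)
  -- conclude via Cayley–Hamilton
  have := congrArg (Polynomial.aeval A) hid
  rw [hrzero, map_add, map_zero, zero_add, _root_.map_mul, Matrix.aeval_self_charpoly,
    zero_mul] at this
  rw [← this]
end

section
/- Let D be an algebraically closed division ring with center F, p either a nonconstant polynomial in F[x] or an element of F⟨X₁,…,Xₘ⟩ with zero constant term and p(F) ≠ {0}, and n ≥ 1. Then every diagonal matrix in Mₙ(D) lies in the image p(Mₙ(D)). -/
/-!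
For a polynomial `p` of positive degree over the center and `d ∈ D`, the polynomial `p - d` has
a root in `D`, so every element of `D` is a value of `p`; taking such values entrywise gives a
diagonal preimage of any diagonal matrix. A noncommutative `p` is reduced to this case by the
substitution `Xⱼ ↦ cⱼ X`, where `p(c) ≠ 0`: this yields a one-variable polynomial `q` with
`q(0) = p(0) = 0` and `q(1) = p(c) ≠ 0`, hence of positive degree, and `q(B) = p(c₁B, …, cₘB)`.
-/

open Polynomial

section

variable {R D : Type*} [CommRing R] [Ring D] [Algebra R D]

theorem exists_aeval_eq_of_forall_exists_root
    (hroot : ∀ q : D[X], 0 < q.degree → ∃ a : D, q.eval a = 0)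
    (hinj : Function.Injective (algebraMap R D)) {p : R[X]} (hp : 0 < p.degree) (d : D) :
    ∃ a : D, aeval a p = d := by
  have hdeg : 0 < (p.map (algebraMap R D) - C d).degree := by
    rwa [degree_sub_C (by rwa [degree_map_eq_of_injective hinj]),
      degree_map_eq_of_injective hinj]
  obtain ⟨a, ha⟩ := hroot _ hdeg
  rw [eval_sub, eval_C, sub_eq_zero, eval_map_algebraMap] at ha
  exact ⟨a, ha⟩

theorem Matrix.aeval_diagonal {n : Type*} [Fintype n] [DecidableEq n] (a : n → D) (p : R[X]) :
    aeval (Matrix.diagonal a) p = Matrix.diagonal (aeval a p) :=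
  aeval_algHom_apply (Matrix.diagonalAlgHom R) a p

theorem exists_aeval_eq_diagonal
    (hroot : ∀ q : D[X], 0 < q.degree → ∃ a : D, q.eval a = 0)
    (hinj : Function.Injective (algebraMap R D)) {p : R[X]} (hp : 0 < p.degree)
    {n : Type*} [Fintype n] [DecidableEq n] (d : n → D) :
    ∃ B : Matrix n n D, aeval B p = Matrix.diagonal d := by
  choose a ha using fun i => exists_aeval_eq_of_forall_exists_root hroot hinj hp (d i)
  refine ⟨Matrix.diagonal a, ?_⟩
  rw [Matrix.aeval_diagonal, aeval_pi_apply]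
  exact congrArg Matrix.diagonal (funext ha)

end

theorem aeval_freeAlgebraLift_smul_X {R A σ : Type*} [CommSemiring R] [Semiring A] [Algebra R A]
    (c : σ → R) (p : FreeAlgebra R σ) (x : A) :
    aeval x (FreeAlgebra.lift R (fun j => c j • (X : R[X])) p) =
      FreeAlgebra.lift R (fun j => c j • x) p := by
  have hcomp : (aeval x).comp (FreeAlgebra.lift R fun j => c j • (X : R[X])) =
      FreeAlgebra.lift R fun j => c j • x := by
    ext j
    simp
  exact DFunLike.congr_fun hcomp p

theorem diagonal_mem_image_general (D : Type*) [DivisionRing D]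
    (hac : ∀ q : Polynomial D, 0 < q.degree → ∃ a : D, q.eval a = 0)
    (n : ℕ) :
    (∀ p : Polynomial (Subring.center D), 0 < p.degree →
      ∀ d : Fin n → D, ∃ B : Matrix (Fin n) (Fin n) D,
        Polynomial.aeval B p = Matrix.diagonal d) ∧
    (∀ m : ℕ, ∀ p : FreeAlgebra (Subring.center D) (Fin m),
      (FreeAlgebra.lift (Subring.center D)
          (fun _ : Fin m => (0 : Subring.center D))) p = 0 →
      (∃ a : Fin m → Subring.center D,
          (FreeAlgebra.lift (Subring.center D) a) p ≠ 0) →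
      ∀ d : Fin n → D, ∃ B : Fin m → Matrix (Fin n) (Fin n) D,
        (FreeAlgebra.lift (Subring.center D) B) p = Matrix.diagonal d) := by
  have hinj := (algebraMap (Subring.center D) D).injective
  refine ⟨fun p hp d => exists_aeval_eq_diagonal hac hinj hp d, ?_⟩
  intro m p hzero ⟨c, hc⟩ d
  set q := FreeAlgebra.lift (Subring.center D) (fun j => c j • (X : (Subring.center D)[X])) p
  have hq_root : q.IsRoot 0 := by
    simpa [IsRoot, ← coe_aeval_eq_eval, q, aeval_freeAlgebraLift_smul_X] using hzero
  have hq_ne : q ≠ 0 := by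
    intro h
    have hq_one := aeval_freeAlgebraLift_smul_X c p (1 : Subring.center D)
    simp only [smul_eq_mul, mul_one] at hq_one
    exact hc (hq_one ▸ (show aeval 1 q = 0 by rw [h, map_zero]))
  obtain ⟨B, hB⟩ := exists_aeval_eq_diagonal hac hinj (degree_pos_of_root hq_ne hq_root) d
  exact ⟨fun j => c j • B, (aeval_freeAlgebraLift_smul_X c p B).symm.trans hB⟩

/-- Let `D` be an algebraically closed division ring with center `F`, and let `p` be
either a nonconstant polynomial in `F[x]`, or an element of `F⟨X₁,…,Xₘ⟩` with zero
constant term and `p(F) ≠ {0}`. Then every diagonal matrix in `Mₙ(D)` lies in the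
image of `p` evaluated on `Mₙ(D)`. -/
theorem diagonal_mem_image (D : Type*) [DivisionRing D]
    (hac : ∀ q : Polynomial D, 0 < q.degree → ∃ a : D, q.eval a = 0)
    (n : ℕ) (hn : 1 ≤ n) :
    (∀ p : Polynomial (Subring.center D), 0 < p.degree →
      ∀ d : Fin n → D, ∃ B : Matrix (Fin n) (Fin n) D,
        Polynomial.aeval B p = Matrix.diagonal d) ∧
    (∀ m : ℕ, ∀ p : FreeAlgebra (Subring.center D) (Fin m),
      (FreeAlgebra.lift (Subring.center D)
          (fun _ : Fin m => (0 : Subring.center D))) p = 0 →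
      (∃ a : Fin m → Subring.center D,
          (FreeAlgebra.lift (Subring.center D) a) p ≠ 0) →
      ∀ d : Fin n → D, ∃ B : Fin m → Matrix (Fin n) (Fin n) D,
        (FreeAlgebra.lift (Subring.center D) B) p = Matrix.diagonal d) :=
  diagonal_mem_image_general D hac n
end

section
/- Let D be an algebraically closed division ring with center F, p ∈ F⟨X₁,…,Xₘ⟩ with zero constant term and p(F) ≠ {0}, and n ≥ 1. Then every diagonalizable matrix A ∈ Mₙ(D) (i.e., A = P⁻¹ Δ P for some invertible P and diagonal Δ) lies in p(Mₙ(D)). -/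
set_option maxHeartbeats 1000000


/-- Conjugation by a unit as an algebra homomorphism. -/
def conjAlgHomAux {R A : Type*} [CommSemiring R] [Semiring A] [Algebra R A]
    (P : Aˣ) : A →ₐ[R] A where
  toFun M := (P⁻¹).val * M * P.val
  map_one' := by simp
  map_mul' M N := by simp only [mul_assoc, Units.mul_inv_cancel_left]
  map_zero' := by simp
  map_add' M N := by simp [mul_add, add_mul]
  commutes' r := by
    show (P⁻¹).val * algebraMap R A r * P.val = algebraMap R A r
    rw [mul_assoc, Algebra.commutes r P.val, ← mul_assoc, Units.inv_mul, one_mul]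

/-- Let `D` be an algebraically closed division ring with center `F`, and let
`p ∈ F⟨X₁,…,Xₘ⟩` have zero constant term with `p(F) ≠ {0}`. Then every
diagonalizable matrix in `Mₙ(D)` lies in `p(Mₙ(D))`. -/
theorem diagonalizable_mem_image (D : Type*) [DivisionRing D]
    (hac : ∀ q : Polynomial D, 0 < q.degree → ∃ a : D, q.eval a = 0)
    (m : ℕ) (p : FreeAlgebra (Subring.center D) (Fin m))
    (hconst : (FreeAlgebra.lift (Subring.center D)
        (fun _ : Fin m => (0 : Subring.center D))) p = 0)
    (hpF : ∃ a : Fin m → Subring.center D,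
        (FreeAlgebra.lift (Subring.center D) a) p ≠ 0)
    (n : ℕ) (hn : 1 ≤ n) (A : Matrix (Fin n) (Fin n) D)
    (hA : ∃ (P : (Matrix (Fin n) (Fin n) D)ˣ) (d : Fin n → D),
        A = (P⁻¹).val * Matrix.diagonal d * P.val) :
    ∃ B : Fin m → Matrix (Fin n) (Fin n) D,
      (FreeAlgebra.lift (Subring.center D) B) p = A := by
  classical
  obtain ⟨P, d, rfl⟩ := hA
  set F := Subring.center D with hF
  obtain ⟨a, ha⟩ := hpF
  -- injectivity of the algebra map F → D
  have hinj : Function.Injective (algebraMap F D) := fun x y h => Subtype.ext h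
  -- the one-variable polynomial q(X) = p(a₁ X, …, aₘ X) over F
  let e : FreeAlgebra F (Fin m) →ₐ[F] Polynomial F :=
    FreeAlgebra.lift F (fun j => Polynomial.C (a j) * Polynomial.X)
  let q : Polynomial F := e p
  -- key identity: for any t : D, p(t a₁, …, t aₘ) = aeval t q
  have key : ∀ t : D,
      FreeAlgebra.lift F (fun j => t * ((a j : D))) p = Polynomial.aeval t q := by
    intro t
    have h : FreeAlgebra.lift F (fun j => t * ((a j : D)))
        = (Polynomial.aeval t).comp e := by
      apply FreeAlgebra.hom_ext
      funext j
      have hc : (a j : D) * t = t * (a j : D) :=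
        (Subring.mem_center_iff.mp (a j).2 t).symm
      simp only [Function.comp_apply, AlgHom.comp_apply, FreeAlgebra.lift_ι_apply,
        map_mul, Polynomial.aeval_C, Polynomial.aeval_X, e]
      rw [← hc]
      rfl
    rw [h]; rfl
  -- lift at all zeros (in D) is zero
  have hzeroD : FreeAlgebra.lift F (fun _ : Fin m => (0 : D)) p = 0 := by
    have h : FreeAlgebra.lift F (fun _ : Fin m => (0 : D))
        = (Algebra.ofId F D).comp (FreeAlgebra.lift F (fun _ : Fin m => (0 : F))) := by
      apply FreeAlgebra.hom_ext
      funext j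
      simp
    rw [h]
    simp only [AlgHom.comp_apply]
    exact (congrArg (Algebra.ofId F D) hconst).trans (map_zero _)
  -- lift at a (valued in D) is nonzero
  have haD : FreeAlgebra.lift F (fun j => ((a j : D))) p ≠ 0 := by
    have h : FreeAlgebra.lift F (fun j => ((a j : D)))
        = (Algebra.ofId F D).comp (FreeAlgebra.lift F a) := by
      apply FreeAlgebra.hom_ext
      funext j
      simp [Algebra.ofId_apply]
      rfl
    rw [h]
    simp only [AlgHom.comp_apply]
    intro hc
    exact ha (by
      have : (Algebra.ofId F D) (FreeAlgebra.lift F a p) = (Algebra.ofId F D) 0 := by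
        simpa using hc
      exact hinj this)
  -- q has zero constant coefficient
  have hq0 : q.coeff 0 = 0 := by
    have h0 : Polynomial.aeval (0 : D) q = 0 := by
      rw [← key 0]
      simpa using hzeroD
    have : algebraMap F D (q.coeff 0) = 0 := by
      rw [Polynomial.aeval_def, Polynomial.eval₂_at_zero] at h0
      exact h0
    exact hinj (by simpa using this)
  -- q is nonzero
  have hqne : q ≠ 0 := by
    intro hq
    apply haD
    have := key 1
    simp only [one_mul] at this
    rw [this, hq]
    simp
  -- q has positive degree
  have hqdeg : 0 < q.degree := by
    by_contra h
    push_neg at h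
    have := Polynomial.eq_C_of_degree_le_zero h
    rw [hq0] at this
    simp at this
    exact hqne this
  -- every element of D is a value of aeval · q
  have surj : ∀ c : D, ∃ t : D, Polynomial.aeval t q = c := by
    intro c
    set qD : Polynomial D := q.map (algebraMap F D) with hqD
    have hdeg : qD.degree = q.degree := Polynomial.degree_map_eq_of_injective hinj q
    have hdegsub : 0 < (qD - Polynomial.C c).degree := by
      rw [Polynomial.degree_sub_C (by rw [hdeg]; exact hqdeg)]
      rw [hdeg]; exact hqdeg
    obtain ⟨t, ht⟩ := hac _ hdegsub
    refine ⟨t, ?_⟩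
    rw [Polynomial.eval_sub, Polynomial.eval_C, sub_eq_zero] at ht
    rw [Polynomial.aeval_def, Polynomial.eval₂_eq_eval_map]
    exact ht
  -- choose t i for each diagonal entry
  choose t ht using fun i => surj (d i)
  -- the witnesses
  refine ⟨fun j => (P⁻¹).val * Matrix.diagonal (fun i => t i * (a j : D)) * P.val, ?_⟩
  -- conjugation algebra hom
  let conj : Matrix (Fin n) (Fin n) D →ₐ[F] Matrix (Fin n) (Fin n) D :=
    conjAlgHomAux P
  -- pi-valued evaluation
  let b : Fin m → (Fin n → D) := fun j i => t i * (a j : D)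
  have hpi : FreeAlgebra.lift F b p = d := by
    funext i
    have h : (Pi.evalAlgHom F (fun _ : Fin n => D) i).comp (FreeAlgebra.lift F b)
        = FreeAlgebra.lift F (fun j => t i * (a j : D)) := by
      apply FreeAlgebra.hom_ext
      funext j
      simp only [Function.comp_apply, AlgHom.comp_apply, FreeAlgebra.lift_ι_apply,
        Pi.evalAlgHom_apply]
      rfl
    have h2 := congrArg (fun f => f p) h
    simp only [AlgHom.comp_apply] at h2
    calc FreeAlgebra.lift F b p i
        = (Pi.evalAlgHom F (fun _ : Fin n => D) i) (FreeAlgebra.lift F b p) := rfl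
      _ = FreeAlgebra.lift F (fun j => t i * (a j : D)) p := h2
      _ = Polynomial.aeval (t i) q := key (t i)
      _ = d i := ht i
  -- diagonal step
  have hdiag : FreeAlgebra.lift F (fun j => Matrix.diagonal (b j)) p
      = Matrix.diagonal d := by
    have h : FreeAlgebra.lift F (fun j => Matrix.diagonal (b j))
        = (Matrix.diagonalAlgHom F).comp (FreeAlgebra.lift F b) := by
      apply FreeAlgebra.hom_ext
      funext j
      simp [Matrix.diagonalAlgHom]
      rfl
    rw [h]
    simp only [AlgHom.comp_apply, hpi]
    rfl
  -- conjugation step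
  have hconj : FreeAlgebra.lift F
      (fun j => (P⁻¹).val * Matrix.diagonal (fun i => t i * (a j : D)) * P.val)
      = conj.comp (FreeAlgebra.lift F (fun j => Matrix.diagonal (b j))) := by
    apply FreeAlgebra.hom_ext
    funext j
    simp only [Function.comp_apply, AlgHom.comp_apply, FreeAlgebra.lift_ι_apply]
    rfl
  rw [hconj]
  simp only [AlgHom.comp_apply, hdiag]
  rfl
end

section
/- Let F be an algebraically closed field of characteristic 0 and n > 1. Every nilpotent matrix A ∈ Mₙ(F) can be written as an additive commutator EG − GE of two idempotent matrices E, G ∈ Mₙ(F). -/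
/-!
Viewing `Fⁿ` as an `F[X]`-module through `A`, the structure theorem splits it into cyclic
modules `F[X] ⧸ (Xᵉ)`; the substitution `X ↦ -X` induces an involution on each of them, which
glues to an involution `S` with `S A = -A S`. Newton's method gives a square root `Q` of
`1 + 4 A²` that is a polynomial in `A²`, so `Q` commutes with `A` and `S`, and then
`T = S (Q + 2 A)` is a second involution with `S T - T S = 4 A`. The idempotents `(1 + S) / 2`
and `(1 + T) / 2` have commutator `(S T - T S) / 4 = A`.
-/

open Polynomial DirectSum

theorem exists_sq_eq_one_add_of_isNilpotent {S : Type*} [CommRing S] (h2 : IsUnit (2 : S))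
    {N : S} (hN : IsNilpotent N) : ∃ Q : S, Q ^ 2 = 1 + N := by
  obtain ⟨Q, ⟨-, hQ⟩, -⟩ := existsUnique_nilpotent_sub_and_aeval_eq_zero (x := (1 : S))
    (P := X ^ 2 - C (1 + N)) (by simpa using hN.neg) (by simpa [one_add_one_eq_two] using h2)
  exact ⟨Q, by simpa [sub_eq_zero] using hQ⟩

section Involution

variable {R : Type*} [Ring R]

theorem exists_mem_adjoin_sq_eq_one_add (K : Type*) [CommRing K] [Algebra K R]
    [Invertible (2 : K)] {N : R} (hN : IsNilpotent N) :
    ∃ Q ∈ Algebra.adjoin K {N}, Q ^ 2 = 1 + N := by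
  obtain ⟨Q, hQ⟩ := exists_sq_eq_one_add_of_isNilpotent (S := Algebra.adjoin K {N})
    (by simpa only [map_ofNat] using (isUnit_of_invertible (2 : K)).map (algebraMap K _))
    (N := ⟨N, Algebra.self_mem_adjoin_singleton K N⟩)
    ((IsNilpotent.map_iff (f := (Algebra.adjoin K {N}).val) Subtype.val_injective).mp hN)
  exact ⟨Q, Q.2, by simpa using congrArg Subtype.val hQ⟩

theorem exists_involution_commutator_eq_two_mul (K : Type*) [CommRing K] [Algebra K R]
    [Invertible (2 : K)] {B S : R} (hB : IsNilpotent B) (hS : S * S = 1)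
    (hSB : S * B = -(B * S)) : ∃ T : R, T * T = 1 ∧ S * T - T * S = 2 * B := by
  have hSB2 : Commute S (B * B) := by
    simp only [Commute, SemiconjBy, ← mul_assoc, hSB, neg_mul, mul_assoc B S B, mul_neg, neg_neg]
  obtain ⟨Q, hQmem, hQ⟩ :=
    exists_mem_adjoin_sq_eq_one_add K ((Commute.refl B).isNilpotent_mul_left hB)
  have hSQ : Commute S Q := Algebra.commute_of_mem_adjoin_singleton_of_commute hQmem hSB2
  have hBQ : Commute B Q := Algebra.commute_of_mem_adjoin_singleton_of_commute hQmem
    ((Commute.refl B).mul_right (Commute.refl B))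
  have hswap : (Q + B) * S = S * (Q - B) := by
    rw [add_mul, ← neg_neg (B * S), ← hSB, ← hSQ.eq, mul_sub, sub_eq_add_neg]
  refine ⟨S * (Q + B), ?_, ?_⟩
  · calc S * (Q + B) * (S * (Q + B)) = S * S * ((Q - B) * (Q + B)) := by
          rw [mul_assoc, ← mul_assoc _ S, hswap]; noncomm_ring
      _ = Q ^ 2 - B * B := by rw [hS, one_mul, sub_mul, mul_add, mul_add, hBQ.eq]; noncomm_ring
      _ = 1 := by rw [hQ]; abel
  · calc S * (S * (Q + B)) - S * (Q + B) * S = (Q + B) - S * S * (Q - B) := by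
          rw [mul_assoc S _ S, hswap, ← mul_assoc, ← mul_assoc, hS, one_mul]
      _ = 2 * B := by rw [hS]; noncomm_ring

section Idempotent

variable {K : Type*} [CommRing K] [Algebra K R] [Invertible (2 : K)]

theorem isIdempotentElem_invOf_two_smul_one_add {S : R} (hS : S * S = 1) :
    IsIdempotentElem ((⅟2 : K) • (1 + S)) := by
  have : (1 + S) * (1 + S) = (2 : K) • (1 + S) :=
    calc (1 + S) * (1 + S) = 1 + S + S + S * S := by noncomm_ring
      _ = (2 : K) • (1 + S) := by rw [hS, two_smul]; abel
  rw [IsIdempotentElem, smul_mul_smul_comm, this, smul_smul, mul_assoc, invOf_mul_self,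
    mul_one]

theorem invOf_two_smul_one_add_commutator (S T : R) :
    (⅟2 : K) • (1 + S) * ((⅟2 : K) • (1 + T)) - (⅟2 : K) • (1 + T) * ((⅟2 : K) • (1 + S)) =
      (⅟2 * ⅟2 : K) • (S * T - T * S) := by
  rw [smul_mul_smul_comm, smul_mul_smul_comm, ← smul_sub]; congr 1; noncomm_ring

end Idempotent

theorem exists_isIdempotentElem_eq_commutator_of_involution (K : Type*) [CommRing K]
    [Algebra K R] [Invertible (2 : K)] {A S : R} (hA : IsNilpotent A) (hS : S * S = 1)
    (hSA : S * A = -(A * S)) :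
    ∃ E G : R, IsIdempotentElem E ∧ IsIdempotentElem G ∧ A = E * G - G * E := by
  obtain ⟨T, hT, hST⟩ := exists_involution_commutator_eq_two_mul K
    ((Commute.ofNat_left 2 A).isNilpotent_mul_left hA) hS
    (by rw [← mul_assoc, (Commute.ofNat_right S 2).eq, mul_assoc, hSA, mul_neg, mul_assoc])
  refine ⟨(⅟2 : K) • (1 + S), (⅟2 : K) • (1 + T), isIdempotentElem_invOf_two_smul_one_add hS,
    isIdempotentElem_invOf_two_smul_one_add hT, ?_⟩
  rw [invOf_two_smul_one_add_commutator, hST, two_mul, two_mul A, ← two_smul K A,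
    ← two_smul K ((2 : K) • A), smul_smul, smul_smul]
  simp [mul_assoc]

end Involution

theorem associated_comp_neg_X_of_dvd_X_pow {K : Type*} [CommRing K] [IsDomain K] {d : K[X]}
    {k : ℕ} (hd : d ∣ X ^ k) : Associated (d.comp (-X)) d := by
  obtain ⟨i, -, hi⟩ := (dvd_prime_pow prime_X k).mp hd
  have hcomp : Associated (d.comp (-X)) ((X ^ i : K[X]).comp (-X)) := by
    simpa [comp_eq_aeval] using hi.map (algEquivAevalNegX (R := K))
  refine hcomp.trans (Associated.trans ?_ hi.symm)
  rw [pow_comp, X_comp, neg_pow]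
  exact associated_unit_mul_left _ _ (isUnit_neg_one.pow i)

section NegXInvolution

variable {K : Type*} [CommRing K]

/-- When `2` is invertible, this amounts to a `ℤ/2`-grading of `M` in which `X` acts by an odd
operator. -/
def IsNegXInvolution {M : Type*} [AddCommGroup M] [Module K[X] M] [Module K M]
    (s : M →ₗ[K] M) : Prop :=
  Function.Involutive s ∧ ∀ z : M, s ((X : K[X]) • z) = -((X : K[X]) • s z)

theorem exists_isNegXInvolution_quotient {d : K[X]} (hd : Associated (d.comp (-X)) d) :
    ∃ s : (K[X] ⧸ Ideal.span {d}) →ₗ[K] K[X] ⧸ Ideal.span {d}, IsNegXInvolution s := by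
  have hmap :
      Ideal.span {d} = (Ideal.span {d}).map (algEquivAevalNegX (R := K) : K[X] →+* K[X]) := by
    obtain ⟨u, hu⟩ := hd
    rw [Ideal.map_span, Set.image_singleton]
    change _ = Ideal.span {d.comp (-X)}
    rw [← Ideal.span_singleton_mul_right_unit u.isUnit (d.comp (-X)), hu]
  set s := Ideal.quotientEquivAlg (Ideal.span {d}) _ algEquivAevalNegX hmap
  have hs : ∀ x, s (Ideal.Quotient.mk _ x) = Ideal.Quotient.mk _ (x.comp (-X)) := fun _ => rfl
  have hX : ∀ x : K[X], (X : K[X]) • Ideal.Quotient.mk (Ideal.span {d}) x =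
      Ideal.Quotient.mk _ (X * x) := fun _ => rfl
  refine ⟨s.toLinearMap, fun z => ?_, fun z => ?_⟩
  · obtain ⟨x, rfl⟩ := Ideal.Quotient.mk_surjective z
    simp [hs, comp_neg_X_comp_neg_X]
  · obtain ⟨x, rfl⟩ := Ideal.Quotient.mk_surjective z
    simp only [hX, AlgEquiv.toLinearMap_apply, hs, mul_comp, X_comp, neg_mul, map_neg]

theorem isNegXInvolution_mapRange {ι : Type*} {M : ι → Type*} [∀ i, AddCommGroup (M i)]
    [∀ i, Module K[X] (M i)] [∀ i, Module K (M i)] {s : ∀ i, M i →ₗ[K] M i}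
    (hs : ∀ i, IsNegXInvolution (s i)) :
    IsNegXInvolution (DFinsupp.mapRange.linearMap s : (⨁ i, M i) →ₗ[K] ⨁ i, M i) := by
  refine ⟨fun y => DFinsupp.ext fun i => ?_, fun y => DFinsupp.ext fun i => ?_⟩
  · simp [(hs i).1 (y i)]
  · simp [(hs i).2 (y i)]

theorem IsNegXInvolution.conj {M N : Type*} [AddCommGroup M] [Module K[X] M] [Module K M]
    [IsScalarTower K K[X] M] [AddCommGroup N] [Module K[X] N] [Module K N]
    [IsScalarTower K K[X] N] {s : M →ₗ[K] M} (hs : IsNegXInvolution s) (e : M ≃ₗ[K[X]] N) :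
    IsNegXInvolution ((e.restrictScalars K).conj s) := by
  refine ⟨fun z => ?_, fun z => ?_⟩
  · simp [LinearEquiv.conj_apply, hs.1 _]
  · simp [LinearEquiv.conj_apply, hs.2 _]

theorem exists_isNegXInvolution_of_X_pow_mem_annihilator {K M : Type*} [Field K]
    [AddCommGroup M] [Module K[X] M] [Module K M] [IsScalarTower K K[X] M]
    [Module.Finite K[X] M] {k : ℕ} (hM : X ^ k ∈ Module.annihilator K[X] M) :
    ∃ s : M →ₗ[K] M, IsNegXInvolution s := by
  have htors : Module.IsTorsion K[X] M := fun m =>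
    ⟨⟨X ^ k, mem_nonZeroDivisors_of_ne_zero (pow_ne_zero k X_ne_zero)⟩,
      Module.mem_annihilator.mp hM m⟩
  obtain ⟨ι, _, p, -, e, ⟨φ⟩⟩ := Module.equiv_directSum_of_isTorsion htors
  have hdvd (i : ι) : p i ^ e i ∣ X ^ k := by
    classical
    have := LinearMap.annihilator_le_of_injective
      (φ.symm.toLinearMap ∘ₗ DirectSum.lof _ ι _ i)
      (φ.symm.injective.comp (DirectSum.of_injective i)) hM
    rwa [Ideal.annihilator_quotient, Ideal.mem_span_singleton] at this
  choose s hs using fun i =>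
    exists_isNegXInvolution_quotient (associated_comp_neg_X_of_dvd_X_pow (hdvd i))
  exact ⟨_, (isNegXInvolution_mapRange hs).conj φ.symm⟩

end NegXInvolution

theorem Module.End.exists_anticommuting_involution_of_isNilpotent {K V : Type*} [Field K]
    [AddCommGroup V] [Module K V] [FiniteDimensional K V] {f : Module.End K V}
    (hf : IsNilpotent f) : ∃ s : Module.End K V, s * s = 1 ∧ s * f = -(f * s) := by
  obtain ⟨k, hk⟩ := hf
  have hM : X ^ k ∈ Module.annihilator K[X] (Module.AEval' f) :=
    Module.mem_annihilator.mpr fun m => (Module.AEval'.of f).symm.injective (by simp [hk])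
  obtain ⟨s, hs⟩ := exists_isNegXInvolution_of_X_pow_mem_annihilator hM
  refine ⟨(Module.AEval'.of f).symm.conj s, LinearMap.ext fun v => ?_,
    LinearMap.ext fun v => ?_⟩
  · simp [LinearEquiv.conj_apply, hs.1 _]
  · simp only [LinearEquiv.conj_apply, LinearEquiv.symm_symm, Module.End.mul_apply,
      LinearMap.coe_comp, LinearEquiv.coe_coe, Function.comp_apply, LinearMap.neg_apply]
    rw [← Module.AEval'.X_smul_of, hs.2, map_neg, Module.AEval'.of_symm_X_smul]

theorem nilpotent_eq_commutator_of_idempotents_general (F : Type*) [Field F]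
    [CharZero F] (n : ℕ)
    (A : Matrix (Fin n) (Fin n) F) (hA : IsNilpotent A) :
    ∃ E G : Matrix (Fin n) (Fin n) F,
      IsIdempotentElem E ∧ IsIdempotentElem G ∧ A = E * G - G * E := by
  obtain ⟨s, hs, hsA⟩ :=
    Module.End.exists_anticommuting_involution_of_isNilpotent (hA.map Matrix.toLinAlgEquiv')
  have hA' : A = LinearMap.toMatrixAlgEquiv' (Matrix.toLinAlgEquiv' A) := by simp
  refine exists_isIdempotentElem_eq_commutator_of_involution F hA
    (S := LinearMap.toMatrixAlgEquiv' s) ?_ ?_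
  · rw [← map_mul, hs, map_one]
  · rw [hA', ← map_mul, ← map_mul, hsA, map_neg]

/-- Over an algebraically closed field of characteristic `0`, every nilpotent
`n × n` matrix (`n > 1`) is an additive commutator of two idempotent matrices. -/
theorem nilpotent_eq_commutator_of_idempotents (F : Type*) [Field F]
    [IsAlgClosed F] [CharZero F] (n : ℕ) (hn : 1 < n)
    (A : Matrix (Fin n) (Fin n) F) (hA : IsNilpotent A) :
    ∃ E G : Matrix (Fin n) (Fin n) F,
      IsIdempotentElem E ∧ IsIdempotentElem G ∧ A = E * G - G * E :=
  nilpotent_eq_commutator_of_idempotents_general F n A hA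
end
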